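/- For every integer n ≥ 1 and every x ∈ ℂ with x ∉ {0, 1, 2, 4, …, 2n}, the partial fraction decomposition g_n(x)/(x(x−1)) = (−1)^n·[ −(1/A_{n0})·1/(x−1) + Σ_{m=0}^n (−1)^m·A_{nm}/(x−2m) ] holds. -/

import Mathlib

/-!
After clearing denominators, `g_n(x) / (x (x - 1)) = P(x) / ∏_{a ∈ S} (x - a)` with
`P(x) = ∏_{k<n} (x + 2k + 1)` of degree `n` and `S = {1, 0, 2, …, 2n}` of size `n + 2`.
Lagrange interpolation of `P` at the nodes `S` therefore gives the partial fraction expansion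
`∑_{a ∈ S} P(a) / ∏_{b ∈ S, b ≠ a} (a - b) / (x - a)`, and it remains to identify the residues:
`Γ(c + n) = Γ(c) ∏_{k<n} (c + k)` turns `A_{nm}` into the quotient of
`∏_{k<n} (m + 1/2 + k) = 2⁻ⁿ P(2m)` by `(2m - 1) (n - m)! m!`.
-/

open Complex Finset

/-- The coefficient `A_{nm} := Γ(n+m+1/2) / ((2m-1)·(n-m)!·m!·Γ(m+1/2))`. -/
noncomputable def Acoef (n m : ℕ) : ℝ :=
  Real.Gamma ((n : ℝ) + m + 1 / 2) /
    ((2 * (m : ℝ) - 1) * (Nat.factorial (n - m) : ℝ) * (Nat.factorial m : ℝ) *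
      Real.Gamma ((m : ℝ) + 1 / 2))

/-- `g_n(x) := ∏_{m=1}^n (x+2m-1)/(x-2m)`. -/
noncomputable def gn (n : ℕ) (x : ℂ) : ℂ :=
  ∏ m ∈ Finset.Icc 1 n, (x + 2 * (m : ℂ) - 1) / (x - 2 * (m : ℂ))

open Polynomial

theorem Polynomial.eval_div_prod_sub_eq_sum {F : Type*} [Field F] [DecidableEq F] (s : Finset F)
    {p : F[X]} (hp : p.degree < #s) {x : F} (hx : x ∉ s) :
    p.eval x / ∏ a ∈ s, (x - a) =
      ∑ a ∈ s, p.eval a / (∏ b ∈ s.erase a, (a - b)) / (x - a) := by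
  have hx' : ∀ a ∈ s, x ≠ id a := fun a ha h => hx (h ▸ ha)
  have hnodal : ∏ a ∈ s, (x - a) ≠ 0 :=
    prod_ne_zero_iff.2 fun a ha => sub_ne_zero.2 (hx' a ha)
  conv_lhs => rw [Lagrange.eq_interpolate (Set.injOn_id _) hp,
    Lagrange.eval_interpolate_not_at_node _ hx', Lagrange.eval_nodal]
  simp only [id, mul_div_cancel_left₀ _ hnodal, Lagrange.nodalWeight, prod_inv_distrib]
  refine sum_congr rfl fun a _ => ?_
  ring

theorem Real.Gamma_add_nat_eq_mul_prod {x : ℝ} (hx : ∀ k : ℕ, x + k ≠ 0) (n : ℕ) :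
    Gamma (x + n) = Gamma x * ∏ k ∈ range n, (x + k) := by
  induction n with
  | zero => simp
  | succ n ih =>
    rw [Nat.cast_succ, ← add_assoc, Real.Gamma_add_one (hx n), ih, prod_range_succ]
    ring

open Nat in
lemma Acoef_eq (n m : ℕ) :
    Acoef n m = (∏ k ∈ range n, ((m : ℝ) + 1 / 2 + k)) / ((2 * m - 1) * (n - m)! * m !) := by
  have hΓ : Real.Gamma ((m : ℝ) + 1 / 2) ≠ 0 := (Real.Gamma_pos_of_pos (by positivity)).ne'
  rw [Acoef, show (n : ℝ) + m + 1 / 2 = (m + 1 / 2) + n by ring,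
    Real.Gamma_add_nat_eq_mul_prod (fun k => by positivity), mul_comm (Real.Gamma _),
    mul_div_mul_right _ _ hΓ]

open Nat in
lemma ofReal_Acoef (n m : ℕ) :
    (Acoef n m : ℂ) =
      (∏ k ∈ range n, ((m : ℂ) + 1 / 2 + k)) / ((2 * m - 1) * (n - m)! * m !) := by
  rw [Acoef_eq]; push_cast; rfl

noncomputable def gnNumerator (n : ℕ) : ℂ[X] := ∏ k ∈ range n, (X + C (2 * k + 1 : ℂ))

lemma eval_gnNumerator (n : ℕ) (x : ℂ) :
    (gnNumerator n).eval x = ∏ k ∈ range n, (x + 2 * k + 1) := by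
  simp only [gnNumerator, eval_prod, eval_add, eval_X, eval_C, add_assoc]

lemma degree_gnNumerator (n : ℕ) : (gnNumerator n).degree = n := by
  simp only [gnNumerator, degree_prod, degree_X_add_C, sum_const, card_range, nsmul_one]

noncomputable def gnPoles (n : ℕ) : Finset ℂ :=
  insert 1 ((range (n + 1)).image fun k : ℕ => 2 * (k : ℂ))

lemma two_mul_natCast_injective : Function.Injective fun k : ℕ => 2 * (k : ℂ) :=
  fun _ _ h => by simpa using h

lemma one_notMem_image_two_mul (s : Finset ℕ) :
    (1 : ℂ) ∉ s.image fun k : ℕ => 2 * (k : ℂ) := by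
  simp only [mem_image, not_exists, not_and]
  intro k _ h
  have : 2 * k = 1 := by exact_mod_cast h
  omega

lemma card_gnPoles (n : ℕ) : #(gnPoles n) = n + 2 := by
  rw [gnPoles, card_insert_of_notMem (one_notMem_image_two_mul _),
    card_image_of_injective _ two_mul_natCast_injective, card_range]

lemma notMem_gnPoles {n : ℕ} {x : ℂ} (hx1 : x ≠ 1)
    (hx : ∀ m : ℕ, m ≤ n → x ≠ 2 * (m : ℂ)) :
    x ∉ gnPoles n := by
  simp only [gnPoles, mem_insert, mem_image, mem_range, not_or, not_exists, not_and]
  exact ⟨hx1, fun m hm h => hx m (by omega) h.symm⟩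

lemma prod_gnPoles (n : ℕ) (x : ℂ) :
    ∏ a ∈ gnPoles n, (x - a) = (x - 1) * ∏ k ∈ range (n + 1), (x - 2 * k) := by
  rw [gnPoles, prod_insert (one_notMem_image_two_mul _),
    prod_image two_mul_natCast_injective.injOn]

lemma sum_gnPoles (n : ℕ) (f : ℂ → ℂ → ℂ) :
    ∑ a ∈ gnPoles n, f a (∏ b ∈ (gnPoles n).erase a, (a - b)) =
      f 1 (∏ k ∈ range (n + 1), (1 - 2 * (k : ℂ))) +
        ∑ m ∈ range (n + 1),
          f (2 * m) ((2 * m - 1) * ∏ k ∈ (range (n + 1)).erase m, (2 * (m : ℂ) - 2 * k)) := by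
  have h1 := one_notMem_image_two_mul (range (n + 1))
  rw [gnPoles, sum_insert h1, erase_insert h1, prod_image two_mul_natCast_injective.injOn,
    sum_image two_mul_natCast_injective.injOn]
  refine congrArg _ (sum_congr rfl fun m hm => ?_)
  have h2m : 2 * (m : ℂ) ≠ 1 := fun h => h1 (mem_image.2 ⟨m, hm, h⟩)
  rw [erase_insert_of_ne h2m.symm, prod_insert fun h => h1 (mem_of_mem_erase h),
    ← image_erase two_mul_natCast_injective, prod_image two_mul_natCast_injective.injOn]

lemma gn_div_eq (n : ℕ) (x : ℂ) :
    gn n x / (x * (x - 1)) = (gnNumerator n).eval x / ∏ a ∈ gnPoles n, (x - a) := by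
  have hIcc (f : ℕ → ℂ) : ∏ m ∈ Icc 1 n, f m = ∏ k ∈ range n, f (k + 1) := by
    rw [range_eq_Ico, prod_Ico_add' f]; rfl
  rw [gn, prod_div_distrib, hIcc, hIcc, eval_gnNumerator, prod_gnPoles, prod_range_succ', div_div]
  congr 1
  · exact prod_congr rfl fun k _ => by push_cast; ring
  · push_cast; ring

open Nat in
lemma prod_erase_natCast_sub {R : Type*} [CommRing R] {m n : ℕ} (hm : m ≤ n) :
    ∏ k ∈ (range (n + 1)).erase m, ((m : R) - k) = (-1) ^ (n - m) * (m ! * (n - m)!) := by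
  have hsplit : (range (n + 1)).erase m = range m ∪ Ico (m + 1) (n + 1) := by
    ext k; simp only [mem_erase, mem_range, mem_union, mem_Ico]; omega
  have hlow : ∏ k ∈ range m, ((m : R) - k) = m ! := by
    rw [← prod_range_reflect, ← prod_range_add_one_eq_factorial, Nat.cast_prod]
    refine prod_congr rfl fun k hk => ?_
    have hk := mem_range.1 hk
    rw [Nat.cast_sub (by omega), Nat.cast_sub (by omega)]; push_cast; ring
  have hhigh : ∏ k ∈ Ico (m + 1) (n + 1), ((m : R) - k) = (-1) ^ (n - m) * (n - m)! := by
    rw [prod_Ico_eq_prod_range, show n + 1 - (m + 1) = n - m by omega,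
      ← prod_range_add_one_eq_factorial, Nat.cast_prod]
    calc ∏ k ∈ range (n - m), ((m : R) - (m + 1 + k : ℕ))
        = ∏ k ∈ range (n - m), (-1) * ((k + 1 : ℕ) : R) :=
          prod_congr rfl fun k _ => by push_cast; ring
      _ = _ := by rw [prod_mul_distrib, prod_const, card_range]
  rw [hsplit, prod_union (disjoint_left.2 fun k hk hk' => by
    simp only [mem_range, mem_Ico] at hk hk'; omega), hlow, hhigh]
  ring

open Nat in
lemma eval_gnNumerator_one (n : ℕ) : (gnNumerator n).eval 1 = 2 ^ n * n ! := by
  rw [eval_gnNumerator, ← prod_range_add_one_eq_factorial, Nat.cast_prod]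
  calc ∏ k ∈ range n, ((1 : ℂ) + 2 * k + 1) = ∏ k ∈ range n, 2 * ((k + 1 : ℕ) : ℂ) :=
        prod_congr rfl fun k _ => by push_cast; ring
    _ = _ := by rw [prod_mul_distrib, prod_const, card_range]

lemma eval_gnNumerator_two_mul (n m : ℕ) :
    (gnNumerator n).eval (2 * (m : ℂ)) = 2 ^ n * ∏ k ∈ range n, ((m : ℂ) + 1 / 2 + k) := by
  rw [eval_gnNumerator]
  calc ∏ k ∈ range n, (2 * (m : ℂ) + 2 * k + 1)
        = ∏ k ∈ range n, 2 * ((m : ℂ) + 1 / 2 + k) :=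
        prod_congr rfl fun k _ => by ring
    _ = _ := by rw [prod_mul_distrib, prod_const, card_range]

lemma prod_range_succ_one_sub_two_mul (n : ℕ) :
    ∏ k ∈ range (n + 1), (1 - 2 * (k : ℂ)) =
      (-2) ^ n * ∏ k ∈ range n, ((1 : ℂ) / 2 + k) := by
  rw [prod_range_succ']
  calc (∏ k ∈ range n, (1 - 2 * ((k + 1 : ℕ) : ℂ))) * (1 - 2 * ((0 : ℕ) : ℂ))
      = ∏ k ∈ range n, (-2) * ((1 : ℂ) / 2 + k) := by
        rw [Nat.cast_zero, mul_zero, sub_zero, mul_one]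
        exact prod_congr rfl fun k _ => by push_cast; ring
    _ = _ := by rw [prod_mul_distrib, prod_const, card_range]

open Nat in
lemma gn_residue_one (n : ℕ) :
    (gnNumerator n).eval 1 / ∏ k ∈ range (n + 1), (1 - 2 * (k : ℂ)) =
      (-1) ^ n * -(1 / (Acoef n 0 : ℂ)) := by
  rw [eval_gnNumerator_one, prod_range_succ_one_sub_two_mul, ofReal_Acoef]
  have hP : ∏ k ∈ range n, ((1 : ℂ) / 2 + k) ≠ 0 :=
    prod_ne_zero_iff.2 fun k _ h =>
      (by positivity : (0 : ℝ) < 1 / 2 + k).ne' (by simpa using congrArg Complex.re h)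
  simp only [CharP.cast_eq_zero, zero_add, mul_zero, zero_sub, Nat.sub_zero, factorial_zero,
    Nat.cast_one, mul_one]
  generalize ∏ k ∈ range n, ((1 : ℂ) / 2 + k) = P at hP ⊢
  have hfac : (n ! : ℂ) ≠ 0 := by exact_mod_cast factorial_ne_zero n
  rw [neg_pow]
  field_simp
  ring_nf
  simp only [(even_two.mul_left _).neg_one_pow]

open Nat in
lemma gn_residue_two_mul {n m : ℕ} (hm : m ≤ n) :
    (gnNumerator n).eval (2 * (m : ℂ)) /
        ((2 * m - 1) * ∏ k ∈ (range (n + 1)).erase m, (2 * (m : ℂ) - 2 * k)) =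
      (-1) ^ n * ((-1) ^ m * (Acoef n m : ℂ)) := by
  have hden : ∏ k ∈ (range (n + 1)).erase m, (2 * (m : ℂ) - 2 * k) =
      2 ^ n * ((-1) ^ (n - m) * (m ! * (n - m)!)) := by
    rw [← prod_erase_natCast_sub hm]
    calc ∏ k ∈ (range (n + 1)).erase m, (2 * (m : ℂ) - 2 * k)
        = ∏ k ∈ (range (n + 1)).erase m, 2 * ((m : ℂ) - k) :=
          prod_congr rfl fun k _ => by ring
      _ = _ := by
        rw [prod_mul_distrib, prod_const, card_erase_of_mem (mem_range.2 (by omega)),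
          card_range, Nat.add_sub_cancel]
  have h2m : (2 * m - 1 : ℂ) ≠ 0 := by
    rw [show (2 * m - 1 : ℂ) = ((2 * m - 1 : ℤ) : ℂ) by push_cast; ring]
    exact_mod_cast (by omega : (2 * m - 1 : ℤ) ≠ 0)
  rw [eval_gnNumerator_two_mul, ofReal_Acoef, hden]
  obtain ⟨j, rfl⟩ := Nat.exists_eq_add_of_le hm
  simp only [Nat.add_sub_cancel_left, pow_add]
  generalize ∏ k ∈ range (m + j), ((m : ℂ) + 1 / 2 + k) = P
  have hfac : (m ! : ℂ) ≠ 0 := by exact_mod_cast factorial_ne_zero m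
  have hfac' : (j ! : ℂ) ≠ 0 := by exact_mod_cast factorial_ne_zero j
  field_simp
  ring_nf
  simp only [(even_two.mul_left _).neg_one_pow]
  ring

theorem stmt_3_general (n : ℕ) (x : ℂ) (hx1 : x ≠ 1)
    (hx : ∀ m : ℕ, m ≤ n → x ≠ 2 * (m : ℂ)) :
    gn n x / (x * (x - 1)) =
      (-1) ^ n * (-(1 / (Acoef n 0 : ℂ)) * (1 / (x - 1)) +
        ∑ m ∈ Finset.range (n + 1), (-1) ^ m * (Acoef n m : ℂ) / (x - 2 * (m : ℂ))) := by
  have hdeg : (gnNumerator n).degree < #(gnPoles n) := by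
    rw [degree_gnNumerator, card_gnPoles]; exact_mod_cast (by omega : n < n + 2)
  rw [gn_div_eq, eval_div_prod_sub_eq_sum _ hdeg (notMem_gnPoles hx1 hx),
    sum_gnPoles n fun a w => (gnNumerator n).eval a / w / (x - a), gn_residue_one, mul_add,
    mul_sum]
  congr 1
  · ring
  · refine sum_congr rfl fun m hm => ?_
    rw [gn_residue_two_mul (Nat.lt_succ_iff.1 (mem_range.1 hm))]
    ring

/-- For every integer `n ≥ 1` and every `x ∈ ℂ` with
`x ∉ {0, 1, 2, 4, …, 2n}`, the partial fraction decomposition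
`g_n(x)/(x(x-1)) = (-1)^n·[-(1/A_{n0})·1/(x-1) + Σ_{m=0}^n (-1)^m·A_{nm}/(x-2m)]` holds. -/
theorem stmt_3 (n : ℕ) (hn : 1 ≤ n) (x : ℂ) (hx1 : x ≠ 1)
    (hx : ∀ m : ℕ, m ≤ n → x ≠ 2 * (m : ℂ)) :
    gn n x / (x * (x - 1)) =
      (-1) ^ n * (-(1 / (Acoef n 0 : ℂ)) * (1 / (x - 1)) +
        ∑ m ∈ Finset.range (n + 1), (-1) ^ m * (Acoef n m : ℂ) / (x - 2 * (m : ℂ))) :=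
  stmt_3_general n x hx1 hx
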